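/- There exists a constant C > 0 such that for every time step k with 0 < k ≤ 1 and every complex number s with Re s > 0, the BDF2 symbol satisfies the consistency estimate |s_k² − s²| ≤ C k² |s|⁴. -/

import Mathlib

/-- The BDF2 symbol s_k = δ(e^{-sk})/k with δ(ζ) = 3/2 - 2ζ + ζ²/2. -/
noncomputable def bdf2Symbol (k : ℝ) (s : ℂ) : ℂ :=
  (1 / (k : ℂ)) * (3 / 2 - 2 * Complex.exp (-s * k) + (1 / 2) * Complex.exp (-2 * s * k))

lemma sum_range3 (w : ℂ) : ∑ m ∈ Finset.range 3, w ^ m / m.factorial = 1 + w + w ^ 2 / 2 := by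
  norm_num [Finset.sum_range_succ]

lemma gbound (w : ℂ) (hw : ‖w‖ ≤ 1) :
    ‖Complex.exp w - (1 + w + w ^ 2 / 2)‖ ≤ 2 / 9 * ‖w‖ ^ 3 := by
  have h := Complex.exp_bound hw (n := 3) (by norm_num)
  rw [sum_range3] at h
  calc ‖Complex.exp w - (1 + w + w ^ 2 / 2)‖
      ≤ ‖w‖ ^ 3 * ((3 : ℕ).succ * ((3 : ℕ).factorial * 3 : ℝ)⁻¹) := h
    _ = 2 / 9 * ‖w‖ ^ 3 := by norm_num [Nat.factorial]; ring

lemma fbound (z : ℂ) (hz : 0 ≤ z.re) :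
    ‖(3 / 2 - 2 * Complex.exp (-z) + (1 / 2) * Complex.exp (-2 * z)) ^ 2 - z ^ 2‖
      ≤ 260 * ‖z‖ ^ 4 := by
  set f : ℂ := 3 / 2 - 2 * Complex.exp (-z) + (1 / 2) * Complex.exp (-2 * z) with hf
  have habs1 : ‖Complex.exp (-z)‖ ≤ 1 := by
    rw [Complex.norm_exp]
    apply Real.exp_le_one_iff.mpr; simpa using hz
  have habs2 : ‖Complex.exp (-2 * z)‖ ≤ 1 := by
    rw [Complex.norm_exp]
    apply Real.exp_le_one_iff.mpr
    simp only [Complex.mul_re]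
    norm_num
    nlinarith
  have hfb : ‖f‖ ≤ 4 := by
    calc ‖f‖ ≤ ‖3 / 2 - 2 * Complex.exp (-z)‖
          + ‖(1 / 2) * Complex.exp (-2 * z)‖ := norm_add_le _ _
      _ ≤ (‖(3 / 2 : ℂ)‖ + ‖2 * Complex.exp (-z)‖)
          + ‖(1 / 2) * Complex.exp (-2 * z)‖ := by
          gcongr; exact norm_sub_le _ _
      _ ≤ 3 / 2 + 2 * 1 + (1 / 2) * 1 := by
          simp only [norm_mul]
          gcongr <;> norm_num
      _ = 4 := by norm_num
  set a : ℝ := ‖z‖ with ha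
  have ha0 : 0 ≤ a := norm_nonneg z
  rcases le_or_gt a (1 / 2) with hsmall | hbig
  · -- small case
    have h1 : ‖-z‖ ≤ 1 := by simpa using hsmall.trans (by norm_num)
    have h2 : ‖-2 * z‖ ≤ 1 := by
      rw [norm_mul]
      simp only [norm_neg]
      calc ‖(2 : ℂ)‖ * ‖z‖ ≤ 2 * (1 / 2) := by
            rw [Complex.norm_two]; gcongr
        _ = 1 := by norm_num
    have g1 := gbound (-z) h1
    have g2 := gbound (-2 * z) h2
    have e1 : ‖-z‖ = a := by rw [norm_neg]
    have e2 : ‖-2 * z‖ = 2 * a := by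
      rw [norm_mul]
      norm_num; exact ha.symm
    rw [e1] at g1
    rw [e2] at g2
    have key : f - z = -2 * (Complex.exp (-z) - (1 + (-z) + (-z) ^ 2 / 2))
        + (1 / 2) * (Complex.exp (-2 * z) - (1 + (-2 * z) + (-2 * z) ^ 2 / 2)) := by
      rw [hf]; ring
    have hfz : ‖f - z‖ ≤ 4 / 3 * a ^ 3 := by
      rw [key]
      refine le_trans (norm_add_le _ _) ?_
      rw [norm_mul, norm_mul]
      have e3 : ‖(-2 : ℂ)‖ = 2 := by norm_num
      have e4 : ‖(1 / 2 : ℂ)‖ = 1 / 2 := by norm_num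
      rw [e3, e4]
      nlinarith [g1, g2, pow_nonneg ha0 3]
    have hfpz : ‖f + z‖ ≤ 4 / 3 * a ^ 3 + 2 * a := by
      calc ‖f + z‖ = ‖(f - z) + 2 * z‖ := by ring_nf
        _ ≤ ‖f - z‖ + ‖2 * z‖ := norm_add_le _ _
        _ ≤ 4 / 3 * a ^ 3 + 2 * a := by
            simp only [norm_mul, Complex.norm_two]
            gcongr
    have : ‖f ^ 2 - z ^ 2‖ = ‖f - z‖ * ‖f + z‖ := by
      rw [← norm_mul]; ring_nf
    rw [this]
    have h3 : ‖f - z‖ * ‖f + z‖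
        ≤ (4 / 3 * a ^ 3) * (4 / 3 * a ^ 3 + 2 * a) := by
      apply mul_le_mul hfz hfpz (norm_nonneg _) (by positivity)
    have h6 : a ^ 6 ≤ (1 / 4) * a ^ 4 := by
      have hsq : a ^ 2 ≤ 1 / 4 := by nlinarith
      nlinarith [mul_le_mul_of_nonneg_right hsq (pow_nonneg ha0 4)]
    nlinarith [h3, h6, pow_nonneg ha0 4]
  · -- big case
    have h1 : ‖f ^ 2 - z ^ 2‖ ≤ 16 + a ^ 2 := by
      calc ‖f ^ 2 - z ^ 2‖ ≤ ‖f ^ 2‖ + ‖z ^ 2‖ :=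
            norm_sub_le _ _
        _ ≤ 16 + a ^ 2 := by
            simp only [norm_pow]
            have : ‖f‖ ^ 2 ≤ 16 := by nlinarith [norm_nonneg f]
            linarith
    have ha2 : (1 / 2 : ℝ) < a := hbig
    nlinarith [sq_nonneg a, sq_nonneg (a - 1 / 2), sq_nonneg (a ^ 2 - 1 / 4)]

/-- There is a constant C > 0 such that for every time step 0 < k ≤ 1 and every
s ∈ ℂ with Re s > 0, the BDF2 symbol satisfies the consistency estimate
|s_k² − s²| ≤ C k² |s|⁴. -/
theorem stmt10 :
    ∃ C : ℝ, 0 < C ∧ ∀ k : ℝ, 0 < k → k ≤ 1 → ∀ s : ℂ, 0 < s.re →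
      ‖(bdf2Symbol k s) ^ 2 - s ^ 2‖ ≤ C * k ^ 2 * (‖s‖) ^ 4 := by
  refine ⟨260, by norm_num, fun k hk hk1 s hs => ?_⟩
  set z : ℂ := s * k with hz
  have hkC : (k : ℂ) ≠ 0 := by exact_mod_cast ne_of_gt hk
  have hre : 0 ≤ z.re := by
    rw [hz]
    simp [Complex.mul_re]
    positivity
  have hexp1 : (-s * (k : ℂ)) = -z := by rw [hz]; ring
  have hexp2 : (-2 * s * (k : ℂ)) = -2 * z := by rw [hz]; ring
  have key : (bdf2Symbol k s) ^ 2 - s ^ 2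
      = (1 / (k : ℂ)) ^ 2 * ((3 / 2 - 2 * Complex.exp (-z) + (1 / 2) * Complex.exp (-2 * z)) ^ 2
        - z ^ 2) := by
    rw [bdf2Symbol, hexp1, hexp2]
    field_simp
    ring
  rw [key, norm_mul]
  have hb := fbound z hre
  have habsz : ‖z‖ = ‖s‖ * k := by
    rw [hz, norm_mul, Complex.norm_real, Real.norm_of_nonneg hk.le]
  have h1 : ‖(1 / (k : ℂ)) ^ 2‖ = 1 / k ^ 2 := by
    simp [norm_pow, abs_of_pos hk]
  rw [h1]
  rw [habsz] at hb
  calc 1 / k ^ 2 * ‖(3 / 2 - 2 * Complex.exp (-z)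
        + (1 / 2) * Complex.exp (-2 * z)) ^ 2 - z ^ 2‖
      ≤ 1 / k ^ 2 * (260 * (‖s‖ * k) ^ 4) := by
        gcongr
    _ = 260 * k ^ 2 * ‖s‖ ^ 4 := by
        field_simp
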